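/- (Pointwise version of the main theorem.) Let E be a real inner product space of even finite dimension, with inner product g = ⟨·,·⟩, and let ω be an alternating bilinear form on E of comass at most 1 with respect to g. Then there exist an inner product g_J on E, a linear map J : E → E with J² = −Id, and an alternating bilinear form Ω on E such that: (1) g_J(v,w) = Ω(v, J w) and Ω(v,w) = g_J(J v, w) for all v, w ∈ E; (2) g_J(J v, J w) = g_J(v, w) for all v, w ∈ E; (3) Ω has comass at most 1 with respect to g_J, i.e. Ω(v,w)² ≤ g_J(v,v) g_J(w,w) − g_J(v,w)² for all v, w; and (4) whenever v, w ∈ E are orthonormal with respect to g and ω(v,w) = 1, then v, w are also orthonormal with respect to g_J, Ω(v,w) = 1, and w = J v (so every 2-plane calibrated by ω in (E, g) is J-holomorphic and calibrated by Ω in (E, g_J)). -/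

import Mathlib

/-!
Let `A` be the operator with `⟪A v, w⟫ = ω v w`. It is skew-adjoint because `ω` is alternating,
and comass at most `1` means `‖A v‖ ≤ ‖v‖`. For a `g`-orthonormal pair with `ω v w = 1` the
equality case of Cauchy–Schwarz gives `A v = w` and `A w = -v`, so calibrated planes lie in the
`-1`-eigenspace `V` of `A²`, on which `A` is a `g`-compatible complex structure. In particular
`V`, hence also `Vᗮ`, is even-dimensional, so `A|V` extends to a `g`-compatible complex
structure `J` on `E`. One may then take `g_J := g` and `Ω := g (J ·, ·)`; this `Ω` has comass
at most `1` by Bessel's inequality for the orthogonal pair `v, J v` of equal length.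
-/

open RealInnerProductSpace Module

theorem even_finrank_of_apply_apply_eq_neg {M : Type*} [AddCommGroup M] [Module ℝ M]
    [FiniteDimensional ℝ M] {J : M →ₗ[ℝ] M} (hJ : ∀ x, J (J x) = -x) :
    Even (finrank ℝ M) := by
  have hdet : LinearMap.det J ^ 2 = (-1) ^ finrank ℝ M := by
    have hJJ : J ∘ₗ J = (-1 : ℝ) • LinearMap.id := LinearMap.ext fun x => by simp [hJ]
    rw [sq, ← LinearMap.det_comp, hJJ, LinearMap.det_smul, LinearMap.det_id, mul_one]
  by_contra hodd
  rw [Nat.not_even_iff_odd.mp hodd |>.neg_one_pow] at hdet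
  nlinarith [sq_nonneg (LinearMap.det J)]

theorem Module.End.apply_mem_eigenspace_mul_self {R M : Type*} [CommRing R] [AddCommGroup M]
    [Module R M] (A : Module.End R M) (μ : R) :
    ∀ x ∈ (A * A).eigenspace μ, A x ∈ (A * A).eigenspace μ := by
  intro x hx
  rw [End.mem_eigenspace_iff, End.mul_apply] at hx ⊢
  rw [hx, map_smul]

section ComplexStructure

variable {F G : Type*} [NormedAddCommGroup F] [InnerProductSpace ℝ F]
  [NormedAddCommGroup G] [InnerProductSpace ℝ G]

structure IsCompatibleComplexStructure (J : F →ₗ[ℝ] F) : Prop where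
  apply_apply : ∀ x, J (J x) = -x
  inner_apply_self : ∀ x, ⟪J x, x⟫ = 0

namespace IsCompatibleComplexStructure

variable {J : F →ₗ[ℝ] F} (hJ : IsCompatibleComplexStructure J)
include hJ

theorem inner_apply_left_eq_neg (x y : F) : ⟪J x, y⟫ = -⟪x, J y⟫ := by
  have h := hJ.inner_apply_self (x + y)
  simp only [map_add, inner_add_left, inner_add_right, hJ.inner_apply_self] at h
  rw [real_inner_comm x (J y)] at h
  linarith

theorem inner_apply_apply (x y : F) : ⟪J x, J y⟫ = ⟪x, y⟫ := by
  rw [hJ.inner_apply_left_eq_neg, hJ.apply_apply, inner_neg_right, neg_neg]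

theorem inner_sq_add_inner_apply_sq_le (v w : F) :
    ⟪v, w⟫ ^ 2 + ⟪J v, w⟫ ^ 2 ≤ ⟪v, v⟫ * ⟪w, w⟫ := by
  set a := ⟪v, w⟫
  set b := ⟪J v, w⟫
  set z := a • v + b • J v
  have hzw : ⟪z, w⟫ = a ^ 2 + b ^ 2 := by
    simp only [z, inner_add_left, real_inner_smul_left]
    ring
  have hzz : ⟪z, z⟫ = (a ^ 2 + b ^ 2) * ⟪v, v⟫ := by
    have hvJv : ⟪v, J v⟫ = 0 := by rw [real_inner_comm]; exact hJ.inner_apply_self v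
    simp only [z, inner_add_left, inner_add_right, real_inner_smul_left, real_inner_smul_right,
      hJ.inner_apply_self, hvJv, hJ.inner_apply_apply]
    ring
  have hcs := real_inner_mul_inner_self_le z w
  rw [hzw, hzz] at hcs
  nlinarith [sq_nonneg a, sq_nonneg b, mul_nonneg (real_inner_self_nonneg (x := v))
    (real_inner_self_nonneg (x := w))]

theorem even_finrank [FiniteDimensional ℝ F] : Even (finrank ℝ F) :=
  even_finrank_of_apply_apply_eq_neg hJ.apply_apply

theorem conj_linearIsometryEquiv (e : G ≃ₗᵢ[ℝ] F) :
    IsCompatibleComplexStructure (e.symm.toLinearMap ∘ₗ J ∘ₗ e.toLinearMap) where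
  apply_apply x := by simp [hJ.apply_apply]
  inner_apply_self x := by
    simpa [← e.inner_map_map (e.symm _)] using hJ.inner_apply_self (e x)

end IsCompatibleComplexStructure

def stdComplexStructure (k : ℕ) :
    EuclideanSpace ℝ (Fin k ⊕ Fin k) →ₗ[ℝ] EuclideanSpace ℝ (Fin k ⊕ Fin k) where
  toFun x := WithLp.toLp 2 (Sum.elim (fun i => -x (.inr i)) fun i => x (.inl i))
  map_add' x y := by ext (i | i) <;> simp [add_comm]
  map_smul' c x := by ext (i | i) <;> simp

theorem isCompatibleComplexStructure_stdComplexStructure (k : ℕ) :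
    IsCompatibleComplexStructure (stdComplexStructure k) where
  apply_apply x := by ext (i | i) <;> simp [stdComplexStructure]
  inner_apply_self x := by
    simp [stdComplexStructure, PiLp.inner_apply, Fintype.sum_sum_type, mul_comm]

theorem exists_isCompatibleComplexStructure [FiniteDimensional ℝ F] (hF : Even (finrank ℝ F)) :
    ∃ J : F →ₗ[ℝ] F, IsCompatibleComplexStructure J := by
  obtain ⟨k, hk⟩ := hF
  let e : F ≃ₗᵢ[ℝ] EuclideanSpace ℝ (Fin k ⊕ Fin k) :=
    ((stdOrthonormalBasis ℝ F).reindex ((finCongr hk).trans finSumFinEquiv.symm)).repr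
  exact ⟨_, (isCompatibleComplexStructure_stdComplexStructure k).conj_linearIsometryEquiv e⟩

theorem IsCompatibleComplexStructure.exists_extension (K : Submodule ℝ F)
    [K.HasOrthogonalProjection] {J₁ : K →ₗ[ℝ] K} {J₂ : Kᗮ →ₗ[ℝ] Kᗮ}
    (h₁ : IsCompatibleComplexStructure J₁) (h₂ : IsCompatibleComplexStructure J₂) :
    ∃ J : F →ₗ[ℝ] F, IsCompatibleComplexStructure J ∧ ∀ x : K, J x = J₁ x := by
  let J := LinearMap.ofIsCompl K.isCompl_orthogonal (K.subtype ∘ₗ J₁) (Kᗮ.subtype ∘ₗ J₂)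
  have hJ (p : K) (q : Kᗮ) : J (p + q) = J₁ p + J₂ q := by
    simp [J, LinearMap.ofIsCompl_apply_left, LinearMap.ofIsCompl_apply_right]
  have hdecomp (x : F) : ∃ (p : K) (q : Kᗮ), x = p + q := by
    obtain ⟨p, hp, q, hq, rfl⟩ := K.exists_add_mem_mem_orthogonal x
    exact ⟨⟨p, hp⟩, ⟨q, hq⟩, rfl⟩
  refine ⟨J, ⟨fun x => ?_, fun x => ?_⟩, fun p => by simpa using hJ p 0⟩
  · obtain ⟨p, q, rfl⟩ := hdecomp x
    rw [hJ, hJ, h₁.apply_apply, h₂.apply_apply, Submodule.coe_neg, Submodule.coe_neg, neg_add]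
  · obtain ⟨p, q, rfl⟩ := hdecomp x
    have hpq : ⟪(J₁ p : F), q⟫ = 0 := K.inner_right_of_mem_orthogonal (J₁ p).2 q.2
    have hqp : ⟪(J₂ q : F), p⟫ = 0 := K.inner_left_of_mem_orthogonal p.2 (J₂ q).2
    have hp : ⟪(J₁ p : F), p⟫ = 0 := h₁.inner_apply_self p
    have hq : ⟪(J₂ q : F), q⟫ = 0 := h₂.inner_apply_self q
    rw [hJ, inner_add_left, inner_add_right, inner_add_right, hpq, hqp, hp, hq]
    norm_num

theorem isCompatibleComplexStructure_restrict_eigenspace {A : F →ₗ[ℝ] F}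
    (hA : ∀ x, ⟪A x, x⟫ = 0) :
    IsCompatibleComplexStructure (A.restrict (End.apply_mem_eigenspace_mul_self A (-1))) where
  apply_apply x := by
    ext
    simpa using End.mem_eigenspace_iff.mp x.2
  inner_apply_self x := hA x

end ComplexStructure

section Calibration

variable {E : Type*} [NormedAddCommGroup E] [InnerProductSpace ℝ E]

theorem exists_isCompatibleComplexStructure_eq_on_eigenspace [FiniteDimensional ℝ E]
    (hE : Even (finrank ℝ E)) {A : E →ₗ[ℝ] E} (hA : ∀ x, ⟪A x, x⟫ = 0) :
    ∃ J : E →ₗ[ℝ] E, IsCompatibleComplexStructure J ∧ ∀ x, A (A x) = -x → J x = A x := by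
  set V := End.eigenspace (A * A) (-1)
  have hV := isCompatibleComplexStructure_restrict_eigenspace hA
  have hVperp : Even (finrank ℝ Vᗮ) := by
    have hsum := V.finrank_add_finrank_orthogonal
    obtain ⟨a, ha⟩ : Even (finrank ℝ V) := hV.even_finrank
    obtain ⟨b, hb⟩ := hE
    exact ⟨b - a, by omega⟩
  obtain ⟨J₂, hJ₂⟩ := exists_isCompatibleComplexStructure hVperp
  obtain ⟨J, hJ, hJA⟩ := hV.exists_extension V hJ₂
  refine ⟨J, hJ, fun x hx => hJA ⟨x, ?_⟩⟩
  simpa [V, End.mem_eigenspace_iff] using hx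

theorem exists_inner_apply_eq [FiniteDimensional ℝ E] (ω : E →ₗ[ℝ] E →ₗ[ℝ] ℝ) :
    ∃ A : E →ₗ[ℝ] E, ∀ v w, ⟪A v, w⟫ = ω v w :=
  ⟨(InnerProductSpace.toDual ℝ E).symm.toLinearEquiv.toLinearMap ∘ₗ
      LinearMap.toContinuousLinearMap.toLinearMap ∘ₗ ω, fun v w => by simp⟩

theorem norm_apply_le_of_inner_sq_le {A : E →ₗ[ℝ] E} (hA : ∀ x, ⟪A x, x⟫ = 0)
    (hcomass : ∀ v w, ⟪A v, w⟫ ^ 2 ≤ ‖v‖ ^ 2 * ‖w‖ ^ 2 - ⟪v, w⟫ ^ 2) (v : E) :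
    ‖A v‖ ≤ ‖v‖ := by
  have h := hcomass v (A v)
  rw [real_inner_self_eq_norm_sq, real_inner_comm, hA, sq 0, mul_zero, sub_zero] at h
  have : ‖A v‖ ^ 2 ≤ ‖v‖ ^ 2 := by nlinarith [sq_nonneg (‖A v‖ ^ 2)]
  exact pow_le_pow_iff_left₀ (norm_nonneg _) (norm_nonneg _) two_ne_zero |>.mp this

theorem apply_eq_of_inner_eq_one {A : E →ₗ[ℝ] E} (hA : ∀ v, ‖A v‖ ≤ ‖v‖) {v w : E}
    (hv : ‖v‖ = 1) (hw : ‖w‖ = 1) (h : ⟪A v, w⟫ = 1) : A v = w := by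
  have hAv : ‖A v‖ = 1 := by
    refine le_antisymm (hv ▸ hA v) ?_
    simpa [h, hw] using real_inner_le_norm (A v) w
  exact (inner_eq_one_iff_of_norm_eq_one hAv hw).mp h

end Calibration

/-- Pointwise version of the main theorem: any alternating bilinear form `ω` of
comass at most 1 on an even-dimensional real inner product space `(E, g)` admits an
inner product `g_J`, a complex structure `J` compatible with `g_J`, and an
alternating bilinear form `Ω` of comass at most 1 with respect to `g_J`, with
`g_J (v, w) = Ω (v, J w)` and `Ω (v, w) = g_J (J v, w)`, such that every `2`-plane
calibrated by `ω` in `(E, g)` is `J`-holomorphic and calibrated by `Ω` in `(E, g_J)`. -/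
theorem stmt17 {E : Type*} [NormedAddCommGroup E] [InnerProductSpace ℝ E]
    [FiniteDimensional ℝ E] (hdim : Even (Module.finrank ℝ E))
    (ω : E →ₗ[ℝ] E →ₗ[ℝ] ℝ) (hω : ∀ v : E, ω v v = 0)
    (hcomass : ∀ v w : E, (ω v w) ^ 2 ≤ ‖v‖ ^ 2 * ‖w‖ ^ 2 - ⟪v, w⟫ ^ 2) :
    ∃ (gJ : E →ₗ[ℝ] E →ₗ[ℝ] ℝ) (J : E →ₗ[ℝ] E) (Ω : E →ₗ[ℝ] E →ₗ[ℝ] ℝ),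
      -- g_J is an inner product
      (∀ v w : E, gJ v w = gJ w v) ∧
      (∀ v : E, v ≠ 0 → 0 < gJ v v) ∧
      -- Ω is alternating and J is a complex structure
      (∀ v : E, Ω v v = 0) ∧
      J ∘ₗ J = -LinearMap.id ∧
      -- (1) compatibility of g_J, Ω and J
      (∀ v w : E, gJ v w = Ω v (J w)) ∧
      (∀ v w : E, Ω v w = gJ (J v) w) ∧
      -- (2) J is a g_J-isometry
      (∀ v w : E, gJ (J v) (J w) = gJ v w) ∧
      -- (3) Ω has comass at most 1 with respect to g_J
      (∀ v w : E, (Ω v w) ^ 2 ≤ gJ v v * gJ w w - (gJ v w) ^ 2) ∧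
      -- (4) planes calibrated by ω in (E, g) are J-holomorphic and calibrated by Ω
      (∀ v w : E, ‖v‖ = 1 → ‖w‖ = 1 → ⟪v, w⟫ = 0 → ω v w = 1 →
        gJ v v = 1 ∧ gJ w w = 1 ∧ gJ v w = 0 ∧ Ω v w = 1 ∧ w = J v) := by
  obtain ⟨A, hA⟩ := exists_inner_apply_eq ω
  have hAself (v : E) : ⟪A v, v⟫ = 0 := by rw [hA, hω]
  have hAnorm := norm_apply_le_of_inner_sq_le hAself (by simpa only [hA] using hcomass)
  obtain ⟨J, hJ, hJA⟩ := exists_isCompatibleComplexStructure_eq_on_eigenspace hdim hAself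
  refine ⟨innerₗ E, J, innerₗ E ∘ₗ J, fun v w => real_inner_comm w v,
    fun v hv => real_inner_self_pos.mpr hv, hJ.inner_apply_self, LinearMap.ext hJ.apply_apply,
    fun v w => (hJ.inner_apply_apply v w).symm, fun _ _ => rfl, hJ.inner_apply_apply,
    fun v w => ?_, fun v w hv hw hvw hωvw => ?_⟩
  · have := hJ.inner_sq_add_inner_apply_sq_le v w
    simp only [innerₗ_apply_apply, LinearMap.comp_apply]
    linarith
  · have hAv : A v = w := apply_eq_of_inner_eq_one hAnorm hv hw (by rw [hA, hωvw])
    have hAw : A w = -v := apply_eq_of_inner_eq_one hAnorm hw (by rw [norm_neg, hv])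
      (by rw [inner_neg_right, hA, ← LinearMap.IsAlt.neg hω, hωvw, neg_neg])
    have hJv : J v = w := by rw [hJA v (by rw [hAv, hAw]), hAv]
    simp [hJv, hv, hw, hvw]
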